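/- Let F ∈ D'_0(α), X ∼ F, and let s_0 > 0 be such that Z(s,ω) := E[ e^{⟨ω,X⟩/s} · 1{|X| ≤ s} ] ∈ (0, e) for all s ≥ s_0 and ω ∈ S^{d−1}. Then there is a constant C depending only on (F, A) such that (ln Z(s,ω))_+ ≤ C / A(s) for all s ≥ s_0 and all ω ∈ S^{d−1}. -/

import Mathlib

open MeasureTheory ProbabilityTheory Filter Set Real

noncomputable section

/-- Euclidean space ℝ^d. -/
abbrev E (d : ℕ) := EuclideanSpace ℝ (Fin d)

/-- A measure on ℝ^d is strictly stable with exponent `α` if for `Y, Y'` i.i.d. `∼ μ` and all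
`a, b > 0`, `a•Y + b•Y'` is distributed as `(a^α + b^α)^(1/α) • Y`. -/
def IsStrictlyStable {d : ℕ} (α : ℝ) (μ : Measure (E d)) : Prop :=
  ∀ a b : ℝ, 0 < a → 0 < b →
    Measure.map (fun p : E d × E d => a • p.1 + b • p.2) (μ.prod μ)
      = Measure.map (fun y : E d => ((a ^ α + b ^ α) ^ α⁻¹ : ℝ) • y) μ

/-- A measure on ℝ^d is nondegenerate if it is not concentrated on any affine subspace of
dimension `d - 1`, equivalently it gives mass `< 1` to every affine hyperplane. -/
def IsNondegenerate {d : ℕ} (μ : Measure (E d)) : Prop :=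
  ∀ v : E d, v ≠ 0 → ∀ c : ℝ, μ {x | (inner ℝ v x : ℝ) = c} ≠ 1

/-- Partial sums `S_n = X_1 + ⋯ + X_n` (`S_0 = 0`). -/
def Sn {Ω : Type} {d : ℕ} (X : ℕ → Ω → E d) (n : ℕ) (ω : Ω) : E d :=
  ∑ i ∈ Finset.range n, X i ω

/-- The half-open cube `h·[0,1)^d`. -/
def cube (d : ℕ) (h : ℝ) : Set (E d) := {x | ∀ i, x i ∈ Ico (0:ℝ) h}

/-- Setup for `F ∈ 𝒟'₀(α)`: an i.i.d. sequence `X` with common law `F`, a norming function `A`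
(strictly increasing, smooth, `A 0 = 0`, `A'(s) ≍ A(s)/s`, `A(s) = (1+o(1)) s²/V_X(s) → ∞`),
`a n = A⁻¹(n)` (`a 0 = 1`), such that the law of `S_n/a_n` converges weakly to a nondegenerate
strictly stable law of exponent `α` with continuous density `ψ`. -/
structure DomainSetup (d : ℕ) (α : ℝ) (Ω : Type) [MeasureSpace Ω] : Type where
  prob : IsProbabilityMeasure (ℙ : Measure Ω)
  X : ℕ → Ω → E d
  meas : ∀ n, Measurable (X n)
  iid : iIndepFun X ℙ
  ident : ∀ n, Measure.map (X n) ℙ = Measure.map (X 0) ℙ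
  A : ℝ → ℝ
  A_zero : A 0 = 0
  A_mono : StrictMonoOn A (Ici 0)
  A_smooth : ContDiffOn ℝ (⊤ : ℕ∞) A (Ioi 0)
  A_top : Tendsto A atTop atTop
  A_deriv : ∃ c C : ℝ, 0 < c ∧
    ∀ s : ℝ, 0 < s → c * (A s / s) ≤ deriv A s ∧ deriv A s ≤ C * (A s / s)
  A_V : Tendsto (fun s => A s * (∫ ω in {ω | ‖X 0 ω‖ ≤ s}, ‖X 0 ω‖ ^ 2) / s ^ 2)
    atTop (nhds 1)
  a : ℕ → ℝ
  a_zero : a 0 = 1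
  a_def : ∀ n : ℕ, 1 ≤ n → 0 < a n ∧ A (a n) = n
  limit : ProbabilityMeasure (E d)
  limit_stable : IsStrictlyStable α (limit : Measure (E d))
  limit_nondeg : IsNondegenerate (limit : Measure (E d))
  μn : ℕ → ProbabilityMeasure (E d)
  μn_eq : ∀ n, (μn n : Measure (E d)) = Measure.map (fun ω => (a n)⁻¹ • Sn X n ω) ℙ
  conv : Tendsto μn atTop (nhds limit)
  ψ : E d → ℝ
  ψ_cont : Continuous ψ
  ψ_nonneg : ∀ x, 0 ≤ ψ x
  ψ_density : (limit : Measure (E d)) = volume.withDensity fun x => ENNReal.ofReal (ψ x)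

/-- `Z(s,ω) = E[e^{⟨ω,X⟩/s} 1_{|X| ≤ s}]`. -/
def Zfun {d : ℕ} {α : ℝ} {Ω : Type} [MeasureSpace Ω]
    (D : DomainSetup d α Ω) (s : ℝ) (ω : E d) : ℝ :=
  ∫ ω' in {ω' | ‖D.X 0 ω'‖ ≤ s}, Real.exp ((inner ℝ ω (D.X 0 ω') : ℝ) / s)

namespace LogZAux

open scoped ENNReal

variable {d : ℕ} {α : ℝ} {Ω : Type} [MeasureSpace Ω] (D : DomainSetup d α Ω)

/-- truncated second moment -/
def Vint (s : ℝ) : ℝ := ∫ ω' in {ω' | ‖D.X 0 ω'‖ ≤ s}, ‖D.X 0 ω'‖ ^ 2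

/-- truncated first moment in direction ω -/
def cint (s : ℝ) (ω : E d) : ℝ := ∫ ω' in {ω' | ‖D.X 0 ω'‖ ≤ s}, (inner ℝ ω (D.X 0 ω') : ℝ)

lemma A_pos {s : ℝ} (hs : 0 < s) : 0 < D.A s := by
  have h := D.A_mono (self_mem_Ici) (mem_Ici.2 hs.le) hs
  rwa [D.A_zero] at h

lemma measSet (s : ℝ) : MeasurableSet {ω' : Ω | ‖D.X 0 ω'‖ ≤ s} :=
  measurableSet_le (D.meas 0).norm measurable_const

lemma exp_le (t : ℝ) (ht : |t| ≤ 1) : Real.exp t ≤ 1 + t + t ^ 2 := by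
  have h := Real.exp_bound ht (by norm_num : 0 < 3)
  simp [Finset.sum_range_succ, Nat.factorial] at h
  have h2 := (abs_sub_le_iff.1 h).1
  have h3 : |t| ^ 3 ≤ t ^ 2 := by
    have h4 : |t| ^ 3 ≤ |t| ^ 2 := pow_le_pow_of_le_one (abs_nonneg t) ht (by norm_num)
    rwa [sq_abs] at h4
  nlinarith

lemma Vint_nonneg (s : ℝ) : 0 ≤ Vint D s :=
  setIntegral_nonneg (measSet D s) (fun x _ => sq_nonneg _)

lemma Z_le (s : ℝ) (hs : 0 < s) (ω : E d) (hω : ‖ω‖ = 1) :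
    Zfun D s ω ≤ 1 + cint D s ω / s + Vint D s / s ^ 2 := by
  haveI := D.prob
  set S : Set Ω := {ω' | ‖D.X 0 ω'‖ ≤ s} with hSdef
  have hS : MeasurableSet S := measSet D s
  have hgmeas : Measurable (fun ρ => (inner ℝ ω (D.X 0 ρ) : ℝ)) := by
    have hc : Continuous fun x : E d => (inner ℝ ω x : ℝ) := continuous_const.inner continuous_id
    exact hc.measurable.comp (D.meas 0)
  have hbound : ∀ ρ ∈ S, |(inner ℝ ω (D.X 0 ρ) : ℝ) / s| ≤ 1 := by
    intro ρ hρ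
    rw [abs_div, abs_of_pos hs, div_le_one hs]
    calc |(inner ℝ ω (D.X 0 ρ) : ℝ)| ≤ ‖ω‖ * ‖D.X 0 ρ‖ := abs_real_inner_le_norm _ _
      _ = ‖D.X 0 ρ‖ := by rw [hω, one_mul]
      _ ≤ s := hρ
  have int1 : IntegrableOn (fun ρ => Real.exp ((inner ℝ ω (D.X 0 ρ) : ℝ) / s)) S ℙ := by
    apply Integrable.mono' (integrable_const (Real.exp 1))
      ((hgmeas.div_const s).exp.aestronglyMeasurable.restrict)
    refine (ae_restrict_iff' hS).2 (Filter.Eventually.of_forall fun ρ hρ => ?_)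
    rw [Real.norm_eq_abs, abs_of_pos (Real.exp_pos _)]
    exact Real.exp_le_exp.2 (le_trans (le_abs_self _) (hbound ρ hρ))
  have i1 : IntegrableOn (fun _ : Ω => (1:ℝ)) S ℙ := integrable_const 1
  have int2 : IntegrableOn (fun ρ => (inner ℝ ω (D.X 0 ρ) : ℝ) / s) S ℙ := by
    apply Integrable.mono' (integrable_const (1:ℝ))
      ((hgmeas.div_const s).aestronglyMeasurable.restrict)
    refine (ae_restrict_iff' hS).2 (Filter.Eventually.of_forall fun ρ hρ => ?_)
    rw [Real.norm_eq_abs]; exact hbound ρ hρ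
  have int3 : IntegrableOn (fun ρ => ((inner ℝ ω (D.X 0 ρ) : ℝ) / s) ^ 2) S ℙ := by
    apply Integrable.mono' (integrable_const (1:ℝ))
      (((hgmeas.div_const s).pow_const 2).aestronglyMeasurable.restrict)
    refine (ae_restrict_iff' hS).2 (Filter.Eventually.of_forall fun ρ hρ => ?_)
    have h := hbound ρ hρ
    rw [Real.norm_eq_abs, abs_of_nonneg (sq_nonneg _), ← sq_abs]
    nlinarith [abs_nonneg ((inner ℝ ω (D.X 0 ρ) : ℝ) / s)]
  have int6 : IntegrableOn (fun ρ => ‖D.X 0 ρ‖ ^ 2) S ℙ := by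
    apply Integrable.mono' (integrable_const (s^2))
      (((D.meas 0).norm.pow_const 2).aestronglyMeasurable.restrict)
    refine (ae_restrict_iff' hS).2 (Filter.Eventually.of_forall fun ρ hρ => ?_)
    rw [Real.norm_eq_abs, abs_of_nonneg (sq_nonneg _)]
    have h : ‖D.X 0 ρ‖ ≤ s := hρ
    nlinarith [norm_nonneg (D.X 0 ρ)]
  have i12 : IntegrableOn (fun ρ => (1:ℝ) + (inner ℝ ω (D.X 0 ρ) : ℝ) / s) S ℙ := i1.add int2
  have step1 : Zfun D s ω ≤
      ∫ ρ in S, ((1:ℝ) + (inner ℝ ω (D.X 0 ρ) : ℝ) / s + ((inner ℝ ω (D.X 0 ρ) : ℝ) / s) ^ 2) ∂ℙ := by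
    refine setIntegral_mono_on int1 (i12.add int3) hS ?_
    intro ρ hρ
    exact exp_le _ (hbound ρ hρ)
  have step2 : (∫ ρ in S, ((1:ℝ) + (inner ℝ ω (D.X 0 ρ) : ℝ) / s
        + ((inner ℝ ω (D.X 0 ρ) : ℝ) / s) ^ 2) ∂ℙ)
      = (ℙ S).toReal + (∫ ρ in S, (inner ℝ ω (D.X 0 ρ) : ℝ) ∂ℙ) / s
        + (∫ ρ in S, (inner ℝ ω (D.X 0 ρ) : ℝ) ^ 2 ∂ℙ) / s ^ 2 := by
    rw [integral_add i12 int3, integral_add i1 int2, integral_div, setIntegral_const]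
    have e2 : (∫ ρ in S, ((inner ℝ ω (D.X 0 ρ) : ℝ) / s) ^ 2 ∂ℙ)
        = (∫ ρ in S, (inner ℝ ω (D.X 0 ρ) : ℝ) ^ 2 ∂ℙ) / s ^ 2 := by
      simp_rw [div_pow]
      rw [integral_div]
    rw [e2]
    simp [smul_eq_mul]; rfl
  have step3 : (∫ ρ in S, (inner ℝ ω (D.X 0 ρ) : ℝ) ^ 2 ∂ℙ) ≤ Vint D s := by
    refine setIntegral_mono_on ?_ int6 hS ?_
    · apply Integrable.mono' (integrable_const (s^2))
        ((hgmeas.pow_const 2).aestronglyMeasurable.restrict)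
      refine (ae_restrict_iff' hS).2 (Filter.Eventually.of_forall fun ρ hρ => ?_)
      rw [Real.norm_eq_abs, abs_of_nonneg (sq_nonneg _), ← sq_abs]
      have h1 : |(inner ℝ ω (D.X 0 ρ) : ℝ)| ≤ s := by
        calc |(inner ℝ ω (D.X 0 ρ) : ℝ)| ≤ ‖ω‖ * ‖D.X 0 ρ‖ := abs_real_inner_le_norm _ _
          _ = ‖D.X 0 ρ‖ := by rw [hω, one_mul]
          _ ≤ s := hρ
      nlinarith [abs_nonneg ((inner ℝ ω (D.X 0 ρ) : ℝ))]
    · intro ρ _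
      have h1 : |(inner ℝ ω (D.X 0 ρ) : ℝ)| ≤ ‖D.X 0 ρ‖ := by
        calc |(inner ℝ ω (D.X 0 ρ) : ℝ)| ≤ ‖ω‖ * ‖D.X 0 ρ‖ := abs_real_inner_le_norm _ _
          _ = ‖D.X 0 ρ‖ := by rw [hω, one_mul]
      nlinarith [sq_abs ((inner ℝ ω (D.X 0 ρ) : ℝ)), abs_nonneg ((inner ℝ ω (D.X 0 ρ) : ℝ)),
        norm_nonneg (D.X 0 ρ)]
  have hP : (ℙ S).toReal ≤ 1 := by
    have h1 : ℙ S ≤ 1 := prob_le_one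
    simpa using ENNReal.toReal_mono (by simp) h1
  have hcint : cint D s ω = ∫ ρ in S, (inner ℝ ω (D.X 0 ρ) : ℝ) ∂ℙ := rfl
  have hdiv : (∫ ρ in S, (inner ℝ ω (D.X 0 ρ) : ℝ) ^ 2 ∂ℙ) / s ^ 2 ≤ Vint D s / s ^ 2 := by
    gcongr
  rw [step2] at step1
  rw [hcint]
  linarith

lemma V_bound : ∃ s₁ : ℝ, 1 ≤ s₁ ∧ ∀ s, s₁ ≤ s → Vint D s ≤ 2 * s ^ 2 / D.A s := by
  have h := D.A_V.eventually (eventually_le_nhds (by norm_num : (1:ℝ) < 2))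
  rw [eventually_atTop] at h
  obtain ⟨s', hs'⟩ := h
  refine ⟨max s' 1, le_max_right _ _, fun s hs => ?_⟩
  have hs1 : (1:ℝ) ≤ s := le_trans (le_max_right _ _) hs
  have hspos : (0:ℝ) < s := lt_of_lt_of_le one_pos hs1
  have hA := A_pos D hspos
  have h2 : D.A s * Vint D s / s ^ 2 ≤ 2 := hs' s (le_trans (le_max_left _ _) hs)
  rw [div_le_iff₀ (by positivity)] at h2
  rw [le_div_iff₀ hA]
  nlinarith

lemma A_double {c Cu : ℝ} (hc : 0 < c)
    (hd : ∀ s : ℝ, 0 < s → c * (D.A s / s) ≤ deriv D.A s ∧ deriv D.A s ≤ Cu * (D.A s / s)) :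
    ∀ t : ℝ, 0 < t → (1 + c / 2) * D.A t ≤ D.A (2 * t) := by
  intro t ht
  have hApos : 0 < D.A t := A_pos D ht
  have h2t : t < 2 * t := by linarith
  have hcont : ContinuousOn D.A (Icc t (2*t)) :=
    (D.A_smooth.continuousOn).mono (fun x hx => lt_of_lt_of_le ht hx.1)
  have hderiv : ∀ x ∈ Ioo t (2*t), HasDerivAt D.A (deriv D.A x) x := by
    intro x hx
    have hxpos : (0:ℝ) < x := lt_trans ht hx.1
    exact ((D.A_smooth.contDiffAt (Ioi_mem_nhds hxpos)).differentiableAt (by simp)).hasDerivAt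
  obtain ⟨x, hx, hslope⟩ := exists_hasDerivAt_eq_slope D.A (deriv D.A) h2t hcont hderiv
  have hxpos : (0:ℝ) < x := lt_trans ht hx.1
  have hlow := (hd x hxpos).1
  have hAx : D.A t ≤ D.A x := (D.A_mono (mem_Ici.2 ht.le) (mem_Ici.2 hxpos.le) hx.1).le
  have hkey : c * (D.A t / (2*t)) ≤ (D.A (2*t) - D.A t) / t := by
    calc c * (D.A t / (2*t)) ≤ c * (D.A x / x) := by
          apply mul_le_mul_of_nonneg_left _ hc.le
          exact div_le_div₀ (le_trans hApos.le hAx) hAx hxpos hx.2.le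
      _ ≤ deriv D.A x := hlow
      _ = (D.A (2*t) - D.A t) / t := by rw [hslope]; ring_nf
  have h2 := mul_le_mul_of_nonneg_right hkey (show (0:ℝ) ≤ 2*t by linarith)
  have e1 : c * (D.A t/(2*t)) * (2*t) = c * D.A t := by field_simp
  have e2 : (D.A (2*t) - D.A t)/t*(2*t) = 2*(D.A (2*t) - D.A t) := by field_simp
  rw [e1, e2] at h2
  linarith

lemma tail_bound {s₁ K : ℝ} (hs₁ : 1 ≤ s₁) (hK : 1 < K)
    (hV : ∀ s, s₁ ≤ s → Vint D s ≤ 2 * s ^ 2 / D.A s)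
    (hdbl : ∀ t : ℝ, 0 < t → K * D.A t ≤ D.A (2 * t)) :
    ∀ s, s₁ ≤ s → ℙ {ρ : Ω | s < ‖D.X 0 ρ‖} ≤ ENNReal.ofReal ((8 / (1 - K⁻¹)) / D.A s) := by
  haveI := D.prob
  intro s hs
  have hss₁ : (1:ℝ) ≤ s := le_trans hs₁ hs
  have hspos : (0:ℝ) < s := lt_of_lt_of_le one_pos hss₁
  have hApos := A_pos D hspos
  have hKpos : (0:ℝ) < K := lt_trans one_pos hK
  set r : ℝ := K⁻¹ with hrdef
  have hr0 : 0 < r := inv_pos.2 hKpos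
  have hr1 : r < 1 := inv_lt_one_of_one_lt₀ hK
  have hAdy : ∀ k : ℕ, K ^ k * D.A s ≤ D.A (2 ^ k * s) := by
    intro k
    induction k with
    | zero => simp
    | succ m ih =>
      have h2 : (0:ℝ) < 2 ^ m * s := by positivity
      calc K ^ (m+1) * D.A s = K * (K ^ m * D.A s) := by ring
        _ ≤ K * D.A (2 ^ m * s) := mul_le_mul_of_nonneg_left ih hKpos.le
        _ ≤ D.A (2 * (2 ^ m * s)) := hdbl _ h2
        _ = D.A (2 ^ (m+1) * s) := by ring_nf
  set Ek : ℕ → Set Ω :=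
    fun k => {ρ | 2 ^ k * s < ‖D.X 0 ρ‖ ∧ ‖D.X 0 ρ‖ ≤ 2 ^ (k+1) * s} with hEkdef
  have hcover : {ρ : Ω | s < ‖D.X 0 ρ‖} ⊆ ⋃ k, Ek k := by
    intro ρ hρ
    have hρ' : s < ‖D.X 0 ρ‖ := hρ
    have hex : ∃ k : ℕ, ‖D.X 0 ρ‖ ≤ 2 ^ (k+1) * s := by
      obtain ⟨k, hk⟩ := pow_unbounded_of_one_lt (‖D.X 0 ρ‖ / s) (one_lt_two : (1:ℝ) < 2)
      rw [div_lt_iff₀ hspos] at hk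
      refine ⟨k, le_trans hk.le ?_⟩
      have h1 : (2:ℝ) ^ k ≤ 2 ^ (k+1) := by
        rw [pow_succ]
        nlinarith [pow_pos (zero_lt_two : (0:ℝ) < 2) k]
      nlinarith
    refine mem_iUnion.2 ⟨Nat.find hex, ?_, Nat.find_spec hex⟩
    rcases Nat.eq_zero_or_pos (Nat.find hex) with h0 | hpos
    · rw [h0]; simpa using hρ'
    · obtain ⟨m, hm⟩ := Nat.exists_eq_succ_of_ne_zero hpos.ne'
      have hmin := Nat.find_min hex (m := m) (by omega)
      rw [hm]
      exact lt_of_not_ge hmin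
  have hpiece : ∀ k : ℕ, ℙ (Ek k) ≤ ENNReal.ofReal ((8 / D.A s) * r ^ (k+1)) := by
    intro k
    set u : ℝ := 2 ^ (k+1) * s with hu
    have hupos : (0:ℝ) < u := by positivity
    have hus : s ≤ u := by
      rw [hu]
      nlinarith [(one_le_pow₀ (one_le_two : (1:ℝ) ≤ 2) : (1:ℝ) ≤ 2 ^ (k+1))]
    set ε : ℝ := (2 ^ k * s) ^ 2 with hε
    have hεpos : (0:ℝ) < ε := by positivity
    set f : Ω → ℝ := fun ρ => if ‖D.X 0 ρ‖ ≤ u then ‖D.X 0 ρ‖ ^ 2 else 0 with hf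
    have hfnn : 0 ≤ᵐ[ℙ] f := Filter.Eventually.of_forall fun ρ => by
      by_cases h : ‖D.X 0 ρ‖ ≤ u <;> simp [hf, h, sq_nonneg]
    have hfmeas : Measurable f :=
      Measurable.ite (measurableSet_le (D.meas 0).norm measurable_const)
        ((D.meas 0).norm.pow_const 2) measurable_const
    have hfint : Integrable f ℙ := by
      apply Integrable.mono' (integrable_const (u^2)) hfmeas.aestronglyMeasurable
      apply Filter.Eventually.of_forall; intro ρ
      by_cases h : ‖D.X 0 ρ‖ ≤ u
      · simp only [hf, if_pos h]
        rw [Real.norm_eq_abs, abs_of_nonneg (sq_nonneg _)]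
        nlinarith [norm_nonneg (D.X 0 ρ)]
      · simp only [hf, if_neg h, norm_zero]; positivity
    have hintf : ∫ ρ, f ρ ∂ℙ = Vint D u := by
      have hfi : f = Set.indicator {ρ | ‖D.X 0 ρ‖ ≤ u} (fun ρ => ‖D.X 0 ρ‖^2) := by
        funext ρ
        by_cases h : ‖D.X 0 ρ‖ ≤ u
        · rw [hf]; simp only []; rw [if_pos h]
          exact (Set.indicator_of_mem (show ρ ∈ {ρ' : Ω | ‖D.X 0 ρ'‖ ≤ u} from h)
            (fun ρ' : Ω => ‖D.X 0 ρ'‖ ^ 2)).symm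
        · rw [hf]; simp only []; rw [if_neg h]
          exact (Set.indicator_of_notMem (show ρ ∉ {ρ' : Ω | ‖D.X 0 ρ'‖ ≤ u} from h)
            (fun ρ' : Ω => ‖D.X 0 ρ'‖ ^ 2)).symm
      rw [hfi, integral_indicator (measSet D u)]; rfl
    have hmark := mul_meas_ge_le_integral_of_nonneg hfnn hfint ε
    have hsub : Ek k ⊆ {ρ | ε ≤ f ρ} := by
      intro ρ hρ
      obtain ⟨h1, h2⟩ := hρ
      have hfρ : f ρ = ‖D.X 0 ρ‖^2 := if_pos h2
      rw [mem_setOf_eq, hfρ]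
      have h3 : (0:ℝ) ≤ 2^k * s := by positivity
      nlinarith
    have hle1 : (ℙ (Ek k)).toReal ≤ Vint D u / ε := by
      have hm : (ℙ (Ek k)).toReal ≤ (ℙ {ρ | ε ≤ f ρ}).toReal :=
        ENNReal.toReal_mono (measure_ne_top _ _) (measure_mono hsub)
      rw [hintf] at hmark
      refine hm.trans ?_
      rw [le_div_iff₀ hεpos]
      have hmark' : ε * (ℙ {ρ | ε ≤ f ρ}).toReal ≤ Vint D u := hmark
      linarith [hmark']
    have hVu := hV u (le_trans hs hus)
    have hAu : 0 < D.A u := A_pos D hupos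
    have hAdyk : K ^ (k+1) * D.A s ≤ D.A u := hAdy (k+1)
    have hfinal : Vint D u / ε ≤ (8 / D.A s) * r ^ (k+1) := by
      have h8 : Vint D u / ε ≤ 8 / D.A u := by
        rw [div_le_div_iff₀ hεpos hAu]
        have hmul : Vint D u * D.A u ≤ 2 * u ^ 2 := by
          have h := mul_le_mul_of_nonneg_right hVu hAu.le
          calc Vint D u * D.A u ≤ (2 * u ^ 2 / D.A u) * D.A u := h
            _ = 2 * u ^ 2 := by field_simp
        have hu2 : u ^ 2 = 4 * ε := by rw [hu, hε]; ring
        nlinarith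
      have h9 : 8 / D.A u ≤ (8 / D.A s) * r ^ (k+1) := by
        have hKk : (0:ℝ) < K ^ (k+1) := by positivity
        have hrK : r ^ (k+1) = (K ^ (k+1))⁻¹ := by
          rw [hrdef, ← inv_pow]
        rw [hrK, div_le_iff₀ hAu, mul_assoc]
        rw [div_mul_eq_mul_div, le_div_iff₀ hApos]
        calc (8:ℝ) * D.A s = 8 * ((K ^ (k+1))⁻¹ * (K ^ (k+1) * D.A s)) := by
              field_simp
          _ ≤ 8 * ((K ^ (k+1))⁻¹ * D.A u) := by
              have := mul_le_mul_of_nonneg_left hAdyk (inv_pos.2 hKk).le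
              nlinarith
      exact h8.trans h9
    calc ℙ (Ek k) = ENNReal.ofReal ((ℙ (Ek k)).toReal) :=
          (ENNReal.ofReal_toReal (measure_ne_top _ _)).symm
      _ ≤ ENNReal.ofReal ((8 / D.A s) * r ^ (k+1)) :=
          ENNReal.ofReal_le_ofReal (hle1.trans hfinal)
  have hsummable : Summable (fun k : ℕ => (8 / D.A s) * r ^ (k+1)) := by
    have h := (summable_geometric_of_lt_one hr0.le hr1).mul_left ((8 / D.A s) * r)
    have he : (fun k : ℕ => (8 / D.A s) * r ^ (k+1)) = fun k => ((8 / D.A s) * r) * r ^ k := by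
      funext k; ring
    rwa [he]
  have htsum : (∑' k : ℕ, (8 / D.A s) * r ^ (k+1)) ≤ (8 / (1 - r)) / D.A s := by
    have he : (fun k : ℕ => (8 / D.A s) * r ^ (k+1)) = fun k => ((8 / D.A s) * r) * r ^ k := by
      funext k; ring
    rw [he, tsum_mul_left, tsum_geometric_of_lt_one hr0.le hr1]
    have h1r : (0:ℝ) < 1 - r := by linarith

    rw [div_eq_mul_inv, div_eq_mul_inv, div_eq_mul_inv]
    have b1 : (0:ℝ) ≤ (D.A s)⁻¹ := (inv_pos.2 hApos).le
    have b2 : (0:ℝ) ≤ (1-r)⁻¹ := (inv_pos.2 h1r).le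
    nlinarith [mul_nonneg (mul_nonneg (by norm_num : (0:ℝ) ≤ 8) b1) b2, hr1.le,
      mul_nonneg b1 b2]
  calc ℙ {ρ : Ω | s < ‖D.X 0 ρ‖} ≤ ℙ (⋃ k, Ek k) := measure_mono hcover
    _ ≤ ∑' k, ℙ (Ek k) := measure_iUnion_le _
    _ ≤ ∑' k, ENNReal.ofReal ((8 / D.A s) * r ^ (k+1)) := ENNReal.tsum_le_tsum hpiece
    _ = ENNReal.ofReal (∑' k : ℕ, (8 / D.A s) * r ^ (k+1)) :=
        (ENNReal.ofReal_tsum_of_nonneg (fun k => by positivity) hsummable).symm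
    _ ≤ ENNReal.ofReal ((8 / (1 - r)) / D.A s) := ENNReal.ofReal_le_ofReal htsum

lemma tight : ∃ R : ℝ, 0 < R ∧ ∃ N : ℕ, ∀ n, N ≤ n → 1 ≤ n →
    ℙ {ρ : Ω | R * D.a n ≤ ‖Sn D.X n ρ‖} ≤ ENNReal.ofReal (1 / 8) := by
  haveI := D.prob
  set F : ℕ → Set (E d) := fun m => {x | (m:ℝ) ≤ ‖x‖} with hF
  have hFclosed : ∀ m, IsClosed (F m) := fun m => isClosed_le continuous_const continuous_norm
  have hFmeas : ∀ m, MeasurableSet (F m) := fun m => (hFclosed m).measurableSet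
  have hFanti : Antitone F := by
    intro m m' hmm' x hx
    have : (m:ℝ) ≤ (m':ℝ) := by exact_mod_cast hmm'
    exact le_trans this hx
  have hFempty : ⋂ m, F m = ∅ := by
    ext x
    simp only [mem_iInter, mem_empty_iff_false, iff_false]
    intro h
    obtain ⟨m, hm⟩ := exists_nat_gt ‖x‖
    exact absurd (h m) (not_le.2 hm)
  have hconv : Tendsto (fun m => (D.limit : Measure (E d)) (F m)) atTop (nhds 0) := by
    have h := tendsto_measure_iInter_atTop (μ := (D.limit : Measure (E d)))
      (fun m => (hFmeas m).nullMeasurableSet) hFanti ⟨0, measure_ne_top _ _⟩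
    rw [hFempty, measure_empty] at h
    exact h
  have hev : ∀ᶠ m in atTop,
      (D.limit : Measure (E d)) (F m) ∈ Iio (ENNReal.ofReal (1/16)) :=
    hconv.eventually (Iio_mem_nhds (by simp))
  obtain ⟨M, hM⟩ := hev.exists
  have hlimsup := ProbabilityMeasure.limsup_measure_closed_le_of_tendsto D.conv (hFclosed M)
  have hlt : (atTop.limsup fun n => (D.μn n : Measure (E d)) (F M))
      < ENNReal.ofReal (1/8) :=
    lt_of_le_of_lt hlimsup (lt_of_lt_of_le hM (ENNReal.ofReal_le_ofReal (by norm_num)))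
  have hev2 : ∀ᶠ n in atTop, (D.μn n : Measure (E d)) (F M) < ENNReal.ofReal (1/8) :=
    eventually_lt_of_limsup_lt hlt
  obtain ⟨N, hN⟩ := eventually_atTop.1 hev2
  refine ⟨(M:ℝ) + 1, by positivity, N, fun n hn hn1 => ?_⟩
  have hμ := hN n hn
  obtain ⟨hapos, haA⟩ := D.a_def n hn1
  have hmeasmap : Measurable (fun ρ => (D.a n)⁻¹ • Sn D.X n ρ) := by
    have hsn : Measurable (fun ρ => Sn D.X n ρ) :=
      Finset.measurable_sum _ (fun i _ => D.meas i)
    exact hsn.const_smul (D.a n)⁻¹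
  have hmap : (D.μn n : Measure (E d)) (F M)
      = ℙ ((fun ρ => (D.a n)⁻¹ • Sn D.X n ρ) ⁻¹' (F M)) := by
    rw [D.μn_eq n, Measure.map_apply hmeasmap (hFmeas M)]
  have hsub : {ρ : Ω | ((M:ℝ)+1) * D.a n ≤ ‖Sn D.X n ρ‖}
      ⊆ (fun ρ => (D.a n)⁻¹ • Sn D.X n ρ) ⁻¹' (F M) := by
    intro ρ hρ
    have hρ' : ((M:ℝ)+1) * D.a n ≤ ‖Sn D.X n ρ‖ := hρ
    show (M:ℝ) ≤ ‖(D.a n)⁻¹ • Sn D.X n ρ‖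
    rw [norm_smul, Real.norm_eq_abs, abs_of_pos (inv_pos.2 hapos), inv_mul_eq_div,
      le_div_iff₀ hapos]
    nlinarith
  calc ℙ {ρ : Ω | ((M:ℝ)+1) * D.a n ≤ ‖Sn D.X n ρ‖}
      ≤ ℙ ((fun ρ => (D.a n)⁻¹ • Sn D.X n ρ) ⁻¹' (F M)) := measure_mono hsub
    _ = (D.μn n : Measure (E d)) (F M) := hmap.symm
    _ ≤ ENNReal.ofReal (1/8) := hμ.le

set_option maxHeartbeats 2000000 in
lemma key {s₁ : ℝ} (hs₁ : 1 ≤ s₁)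
    (hV : ∀ s, s₁ ≤ s → Vint D s ≤ 2 * s ^ 2 / D.A s) :
    ∃ C₂ : ℝ, 0 ≤ C₂ ∧ ∃ s₂ : ℝ, s₁ ≤ s₂ ∧
      ∀ s, s₂ ≤ s → ∀ ω : E d, ‖ω‖ = 1 → cint D s ω / s ≤ C₂ / D.A s := by
  haveI := D.prob
  obtain ⟨c, Cu, hc, hd⟩ := D.A_deriv
  set K : ℝ := 1 + c/2 with hKd
  have hK1 : 1 < K := by rw [hKd]; linarith
  have hdbl : ∀ t : ℝ, 0 < t → K * D.A t ≤ D.A (2 * t) := by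
    intro t ht
    have h := A_double D hc hd t ht
    rw [hKd]
    linarith
  set C₁ : ℝ := 8 / (1 - K⁻¹) with hC₁d
  have hKinv : K⁻¹ < 1 := inv_lt_one_of_one_lt₀ hK1
  have h1K : (0:ℝ) < 1 - K⁻¹ := by linarith
  have hC₁pos : 0 < C₁ := by rw [hC₁d]; positivity
  have htail := tail_bound D hs₁ hK1 hV hdbl
  set η : ℝ := 1 / (8 * (C₁ + 1)) with hηd
  have hηpos : 0 < η := by rw [hηd]; positivity
  have hη1 : η ≤ 1 := by
    rw [hηd, div_le_one (by positivity)]; linarith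
  have hηC₁ : η * C₁ ≤ 1/8 := by
    rw [hηd, div_mul_eq_mul_div, div_le_div_iff₀ (by positivity) (by norm_num)]
    nlinarith
  obtain ⟨R, hR, N, hN⟩ := tight D
  have hAev : ∀ᶠ s in atTop, (2 + 2*(N:ℝ))/η + 2 ≤ D.A s := D.A_top.eventually_ge_atTop _
  obtain ⟨s₂', hs₂'⟩ := eventually_atTop.1 hAev
  refine ⟨2*(R+4)/η, by positivity, max s₁ s₂', le_max_left _ _, fun s hs ω hω => ?_⟩
  have hss₁ : s₁ ≤ s := le_trans (le_max_left _ _) hs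
  have hs1 : (1:ℝ) ≤ s := le_trans hs₁ hss₁
  have hspos : (0:ℝ) < s := by linarith
  have hApos : 0 < D.A s := A_pos D hspos
  have hAbig : (2 + 2*(N:ℝ))/η + 2 ≤ D.A s := hs₂' s (le_trans (le_max_right _ _) hs)
  have hA2' : (2 + 2*(N:ℝ)) + 2*η ≤ η * D.A s := by
    have h := mul_le_mul_of_nonneg_left hAbig hηpos.le
    calc (2 + 2*(N:ℝ)) + 2*η = η * ((2 + 2*(N:ℝ))/η + 2) := by field_simp
      _ ≤ η * D.A s := h
  have hA2 : 2 ≤ η * D.A s := by nlinarith [hηpos, (Nat.cast_nonneg N : (0:ℝ) ≤ (N:ℝ))]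
  set n : ℕ := ⌊η * D.A s⌋₊ with hnd
  have hn1 : 1 ≤ n := by
    rw [hnd]; apply Nat.le_floor; rw [Nat.cast_one]; linarith
  have hnleR : (n:ℝ) ≤ η * D.A s := Nat.floor_le (by positivity)
  have hnleA : (n:ℝ) ≤ D.A s := le_trans hnleR (by nlinarith)
  have hngeR : η * D.A s / 2 ≤ (n:ℝ) := by
    have h1 : η * D.A s - 1 < (n:ℝ) := by
      have h := Nat.sub_one_lt_floor (η * D.A s)
      exact_mod_cast h
    linarith
  have hnN : N ≤ n := by
    have h1 : (N:ℝ) ≤ η * D.A s / 2 := by linarith [hηpos.le]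
    exact_mod_cast le_trans h1 hngeR
  obtain ⟨hapos, haA⟩ := D.a_def n hn1
  have han : D.a n ≤ s := by
    by_contra hlt
    push_neg at hlt
    have h := D.A_mono (mem_Ici.2 hspos.le) (mem_Ici.2 hapos.le) hlt
    rw [haA] at h
    linarith
  -- truncated projections
  set f : E d → ℝ := fun x => if ‖x‖ ≤ s then (inner ℝ ω x : ℝ) else 0 with hfd
  have hfmeas : Measurable f := by
    apply Measurable.ite (measurableSet_le measurable_norm measurable_const) _ measurable_const
    exact (continuous_const.inner continuous_id).measurable
  have hfbdd : ∀ x : E d, |f x| ≤ s := by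
    intro x
    rw [hfd]; simp only []
    by_cases h : ‖x‖ ≤ s
    · rw [if_pos h]
      calc |(inner ℝ ω x : ℝ)| ≤ ‖ω‖ * ‖x‖ := abs_real_inner_le_norm _ _
        _ = ‖x‖ := by rw [hω, one_mul]
        _ ≤ s := h
    · rw [if_neg h]; simpa using hspos.le
  set W : ℕ → Ω → ℝ := fun i => f ∘ D.X i with hWd
  have hWmeas : ∀ i, Measurable (W i) := fun i => hfmeas.comp (D.meas i)
  have hWmem : ∀ i : ℕ, MemLp (W i) 2 ℙ := fun i =>
    MemLp.of_bound (hWmeas i).aestronglyMeasurable s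
      (Filter.Eventually.of_forall fun ρ => by rw [Real.norm_eq_abs]; exact hfbdd _)
  have hWint : ∀ i : ℕ, ∫ ρ, W i ρ ∂ℙ = cint D s ω := by
    intro i
    have h1 : ∫ ρ, W i ρ ∂ℙ = ∫ x, f x ∂(Measure.map (D.X i) ℙ) :=
      (integral_map (D.meas i).aemeasurable hfmeas.aestronglyMeasurable).symm
    rw [h1, D.ident i, integral_map (D.meas 0).aemeasurable hfmeas.aestronglyMeasurable]
    have h2 : (fun ρ => f (D.X 0 ρ))
        = Set.indicator {ρ' : Ω | ‖D.X 0 ρ'‖ ≤ s} (fun ρ => (inner ℝ ω (D.X 0 ρ) : ℝ)) := by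
      funext ρ
      by_cases h : ‖D.X 0 ρ‖ ≤ s
      · rw [hfd]; simp only []; rw [if_pos h]
        exact (Set.indicator_of_mem (show ρ ∈ {ρ' : Ω | ‖D.X 0 ρ'‖ ≤ s} from h)
          (fun ρ => (inner ℝ ω (D.X 0 ρ) : ℝ))).symm
      · rw [hfd]; simp only []; rw [if_neg h]
        exact (Set.indicator_of_notMem (show ρ ∉ {ρ' : Ω | ‖D.X 0 ρ'‖ ≤ s} from h)
          (fun ρ => (inner ℝ ω (D.X 0 ρ) : ℝ))).symm
    rw [h2, integral_indicator (measSet D s)]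
    rfl
  have hinmeas : Measurable (fun ρ : Ω => (inner ℝ ω (D.X 0 ρ) : ℝ)) := by
    have hcont : Continuous fun x : E d => (inner ℝ ω x : ℝ) := continuous_const.inner continuous_id
    exact hcont.measurable.comp (D.meas 0)
  have hWsq : ∀ i : ℕ, ∫ ρ, (W i ρ)^2 ∂ℙ ≤ Vint D s := by
    intro i
    have hf2meas : Measurable (fun x : E d => (f x)^2) := hfmeas.pow_const 2
    have h1 : ∫ ρ, (W i ρ)^2 ∂ℙ = ∫ x, (f x)^2 ∂(Measure.map (D.X i) ℙ) :=
      (integral_map (D.meas i).aemeasurable hf2meas.aestronglyMeasurable).symm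
    rw [h1, D.ident i, integral_map (D.meas 0).aemeasurable hf2meas.aestronglyMeasurable]
    have h2 : (fun ρ => (f (D.X 0 ρ))^2)
        = Set.indicator {ρ' : Ω | ‖D.X 0 ρ'‖ ≤ s} (fun ρ => (inner ℝ ω (D.X 0 ρ) : ℝ)^2) := by
      funext ρ
      by_cases h : ‖D.X 0 ρ‖ ≤ s
      · rw [hfd]; simp only []; rw [if_pos h]
        exact (Set.indicator_of_mem (show ρ ∈ {ρ' : Ω | ‖D.X 0 ρ'‖ ≤ s} from h)
          (fun ρ => (inner ℝ ω (D.X 0 ρ) : ℝ)^2)).symm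
      · rw [hfd]; simp only []; rw [if_neg h, zero_pow (two_ne_zero)]
        exact (Set.indicator_of_notMem (show ρ ∉ {ρ' : Ω | ‖D.X 0 ρ'‖ ≤ s} from h)
          (fun ρ => (inner ℝ ω (D.X 0 ρ) : ℝ)^2)).symm
    rw [h2, integral_indicator (measSet D s)]
    refine setIntegral_mono_on ?_ ?_ (measSet D s) ?_
    · apply Integrable.mono' (integrable_const (s^2))
        (hinmeas.pow_const 2).aestronglyMeasurable.restrict
      refine (ae_restrict_iff' (measSet D s)).2 (Filter.Eventually.of_forall fun ρ hρ => ?_)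
      rw [Real.norm_eq_abs, abs_of_nonneg (sq_nonneg _), ← sq_abs]
      have h1' : |(inner ℝ ω (D.X 0 ρ) : ℝ)| ≤ s := by
        calc |(inner ℝ ω (D.X 0 ρ) : ℝ)| ≤ ‖ω‖ * ‖D.X 0 ρ‖ := abs_real_inner_le_norm _ _
          _ = ‖D.X 0 ρ‖ := by rw [hω, one_mul]
          _ ≤ s := hρ
      nlinarith [abs_nonneg ((inner ℝ ω (D.X 0 ρ) : ℝ))]
    · apply Integrable.mono' (integrable_const (s^2))
        ((D.meas 0).norm.pow_const 2).aestronglyMeasurable.restrict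
      refine (ae_restrict_iff' (measSet D s)).2 (Filter.Eventually.of_forall fun ρ hρ => ?_)
      rw [Real.norm_eq_abs, abs_of_nonneg (sq_nonneg _)]
      have h1' : ‖D.X 0 ρ‖ ≤ s := hρ
      nlinarith [norm_nonneg (D.X 0 ρ)]
    · intro ρ _
      have h1' : |(inner ℝ ω (D.X 0 ρ) : ℝ)| ≤ ‖D.X 0 ρ‖ := by
        calc |(inner ℝ ω (D.X 0 ρ) : ℝ)| ≤ ‖ω‖ * ‖D.X 0 ρ‖ := abs_real_inner_le_norm _ _
          _ = ‖D.X 0 ρ‖ := by rw [hω, one_mul]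
      nlinarith [sq_abs ((inner ℝ ω (D.X 0 ρ) : ℝ)), abs_nonneg ((inner ℝ ω (D.X 0 ρ) : ℝ)),
        norm_nonneg (D.X 0 ρ)]
  have hvar : ∀ i : ℕ, variance (W i) ℙ ≤ Vint D s := by
    intro i
    refine le_trans (variance_le_expectation_sq (hWmeas i).aestronglyMeasurable) ?_
    have he : (∫ ρ, ((W i) ^ 2) ρ ∂ℙ) = ∫ ρ, (W i ρ)^2 ∂ℙ := by
      apply integral_congr_ae
      exact Filter.Eventually.of_forall fun ρ => by simp [Pi.pow_apply]
    calc (∫ ρ, ((W i) ^ 2) ρ ∂ℙ) = ∫ ρ, (W i ρ)^2 ∂ℙ := he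
      _ ≤ Vint D s := hWsq i
  set T : Ω → ℝ := ∑ i ∈ Finset.range n, W i with hTd
  have hTmem : MemLp T 2 ℙ := memLp_finset_sum' _ (fun i _ => hWmem i)
  have hTapp : ∀ ρ, T ρ = ∑ i ∈ Finset.range n, W i ρ := fun ρ => by
    rw [hTd, Finset.sum_apply]
  have hTint : (∫ ρ, T ρ ∂ℙ) = n * cint D s ω := by
    have h1 : (∫ ρ, T ρ ∂ℙ) = ∫ ρ, ∑ i ∈ Finset.range n, W i ρ ∂ℙ := by
      apply integral_congr_ae
      exact Filter.Eventually.of_forall fun ρ => hTapp ρ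
    rw [h1, integral_finset_sum _ (fun i _ => (hWmem i).integrable one_le_two)]
    rw [Finset.sum_congr rfl (fun i _ => hWint i), Finset.sum_const, Finset.card_range,
      nsmul_eq_mul]
  have hvarT : variance T ℙ ≤ n * Vint D s := by
    have hpair : Set.Pairwise ↑(Finset.range n) (fun i j => IndepFun (W i) (W j) ℙ) := by
      intro i _ j _ hij
      exact (D.iid.comp (fun _ => f) (fun _ => hfmeas)).indepFun hij
    rw [hTd, IndepFun.variance_sum (fun i _ => hWmem i) hpair]
    calc ∑ i ∈ Finset.range n, variance (W i) ℙ
        ≤ ∑ i ∈ Finset.range n, Vint D s := Finset.sum_le_sum (fun i _ => hvar i)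
      _ = n * Vint D s := by rw [Finset.sum_const, Finset.card_range, nsmul_eq_mul]
  have hcheb := meas_ge_le_variance_div_sq (μ := ℙ) hTmem (show (0:ℝ) < 4*s by linarith)
  have hchebb : ℙ {ρ | 4*s ≤ |T ρ - (∫ ρ', T ρ' ∂ℙ)|} ≤ ENNReal.ofReal (1/8) := by
    refine le_trans hcheb (ENNReal.ofReal_le_ofReal ?_)
    have h1 : (n:ℝ) * Vint D s ≤ 2 * s^2 := by
      have hVs := hV s hss₁
      calc (n:ℝ) * Vint D s ≤ D.A s * Vint D s :=
            mul_le_mul_of_nonneg_right hnleA (Vint_nonneg D s)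
        _ ≤ D.A s * (2*s^2/D.A s) := mul_le_mul_of_nonneg_left hVs hApos.le
        _ = 2*s^2 := by field_simp
    rw [div_le_div_iff₀ (by positivity) (by norm_num)]
    nlinarith [hvarT]
  set B₁ : Set Ω := ⋃ i ∈ Finset.range n, {ρ : Ω | s < ‖D.X i ρ‖} with hB₁d
  have hB₁m : ℙ B₁ ≤ ENNReal.ofReal (1/8) := by
    have hmx : MeasurableSet {x : E d | s < ‖x‖} :=
      measurableSet_lt measurable_const measurable_norm
    calc ℙ B₁ ≤ ∑ i ∈ Finset.range n, ℙ {ρ : Ω | s < ‖D.X i ρ‖} :=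
          measure_biUnion_finset_le _ _
      _ = ∑ i ∈ Finset.range n, ℙ {ρ : Ω | s < ‖D.X 0 ρ‖} := by
          refine Finset.sum_congr rfl (fun i _ => ?_)
          have h1 : {ρ : Ω | s < ‖D.X i ρ‖} = (D.X i) ⁻¹' {x : E d | s < ‖x‖} := rfl
          have h2 : {ρ : Ω | s < ‖D.X 0 ρ‖} = (D.X 0) ⁻¹' {x : E d | s < ‖x‖} := rfl
          rw [h1, h2, ← Measure.map_apply (D.meas i) hmx,
            ← Measure.map_apply (D.meas 0) hmx, D.ident i]
      _ = (n : ℝ≥0∞) * ℙ {ρ : Ω | s < ‖D.X 0 ρ‖} := by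
          rw [Finset.sum_const, Finset.card_range, nsmul_eq_mul]
      _ ≤ (n : ℝ≥0∞) * ENNReal.ofReal (C₁ / D.A s) :=
          mul_le_mul_right (htail s hss₁) _
      _ ≤ ENNReal.ofReal (1/8) := by
          rw [show ((n:ℝ≥0∞)) = ENNReal.ofReal (n:ℝ) by simp,
            ← ENNReal.ofReal_mul (Nat.cast_nonneg n)]
          apply ENNReal.ofReal_le_ofReal
          calc (n:ℝ) * (C₁/D.A s) ≤ (η * D.A s) * (C₁ / D.A s) :=
                mul_le_mul_of_nonneg_right hnleR (by positivity)
            _ = η * C₁ := by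
                field_simp
            _ ≤ 1/8 := hηC₁
  set B₂ : Set Ω := {ρ | 4*s ≤ |T ρ - (∫ ρ', T ρ' ∂ℙ)|} with hB₂d
  set B₃ : Set Ω := {ρ : Ω | R * D.a n ≤ ‖Sn D.X n ρ‖} with hB₃d
  have hB₃m : ℙ B₃ ≤ ENNReal.ofReal (1/8) := hN n hnN hn1
  have hexists : ∃ ρ : Ω, ρ ∉ B₁ ∪ B₂ ∪ B₃ := by
    by_contra hcon
    push_neg at hcon
    have h1 : (1:ℝ≥0∞) ≤ ℙ (B₁ ∪ B₂ ∪ B₃) := by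
      have huniv : (univ : Set Ω) ⊆ B₁ ∪ B₂ ∪ B₃ := fun ρ _ => hcon ρ
      calc (1:ℝ≥0∞) = ℙ (univ : Set Ω) := measure_univ.symm
        _ ≤ ℙ (B₁ ∪ B₂ ∪ B₃) := measure_mono huniv
    have h2 : ℙ (B₁ ∪ B₂ ∪ B₃) ≤ ENNReal.ofReal (3/8) := by
      calc ℙ (B₁ ∪ B₂ ∪ B₃) ≤ ℙ (B₁ ∪ B₂) + ℙ B₃ := measure_union_le _ _
        _ ≤ (ℙ B₁ + ℙ B₂) + ℙ B₃ := add_le_add_left (measure_union_le _ _) _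
        _ ≤ (ENNReal.ofReal (1/8) + ENNReal.ofReal (1/8)) + ENNReal.ofReal (1/8) :=
            add_le_add (add_le_add hB₁m hchebb) hB₃m
        _ = ENNReal.ofReal (3/8) := by
            rw [← ENNReal.ofReal_add (by norm_num) (by norm_num),
              ← ENNReal.ofReal_add (by norm_num) (by norm_num)]
            norm_num
    have h3 := le_trans h1 h2
    have h4 : ENNReal.ofReal (3/8) < 1 := by
      rw [ENNReal.ofReal_lt_one]
      norm_num
    exact absurd h3 (not_le.2 h4)
  obtain ⟨ρ, hρ⟩ := hexists
  simp only [mem_union, not_or] at hρ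
  obtain ⟨⟨hρ1, hρ2⟩, hρ3⟩ := hρ
  have hXi : ∀ i ∈ Finset.range n, ‖D.X i ρ‖ ≤ s := by
    intro i hi
    by_contra h
    push_neg at h
    exact hρ1 (mem_biUnion hi h)
  have hTρ : T ρ = (inner ℝ ω (Sn D.X n ρ) : ℝ) := by
    have hW' : ∀ i ∈ Finset.range n, W i ρ = (inner ℝ ω (D.X i ρ) : ℝ) := by
      intro i hi
      rw [hWd]; simp only [Function.comp_apply]; rw [hfd]; simp only []
      exact if_pos (hXi i hi)
    rw [hTapp ρ, Finset.sum_congr rfl hW']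
    exact (inner_sum (Finset.range n) (fun i => D.X i ρ) ω).symm
  have hfin : (n:ℝ) * cint D s ω ≤ (R + 4) * s := by
    have h1 : |T ρ - (∫ ρ', T ρ' ∂ℙ)| < 4*s := not_le.1 hρ2
    have h2 : ‖Sn D.X n ρ‖ < R * D.a n := not_le.1 hρ3
    have h3 : (inner ℝ ω (Sn D.X n ρ) : ℝ) ≤ ‖Sn D.X n ρ‖ := by
      calc (inner ℝ ω (Sn D.X n ρ) : ℝ) ≤ ‖ω‖ * ‖Sn D.X n ρ‖ := real_inner_le_norm _ _
        _ = ‖Sn D.X n ρ‖ := by rw [hω, one_mul]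
    have h4 : R * D.a n ≤ R * s := mul_le_mul_of_nonneg_left han hR.le
    rw [hTint, hTρ] at h1
    have h5 := abs_lt.1 h1
    nlinarith
  have hn2 : (0:ℝ) < (n:ℝ) := by exact_mod_cast hn1
  rw [div_le_div_iff₀ hspos hApos]
  have hAs2n : D.A s ≤ 2 * n / η := by
    rw [le_div_iff₀ hηpos]
    nlinarith [hngeR]
  rcases le_or_gt (cint D s ω) 0 with hneg | hpos
  · calc cint D s ω * D.A s ≤ 0 := mul_nonpos_of_nonpos_of_nonneg hneg hApos.le
      _ ≤ 2*(R+4)/η * s := by positivity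
  · calc cint D s ω * D.A s ≤ cint D s ω * (2*n/η) :=
        mul_le_mul_of_nonneg_left hAs2n hpos.le
      _ = ((n:ℝ) * cint D s ω) * (2/η) := by ring
      _ ≤ ((R+4)*s) * (2/η) := mul_le_mul_of_nonneg_right hfin (by positivity)
      _ = 2*(R+4)/η * s := by ring

end LogZAux

open LogZAux

/-- **Lemma 4.4**: let `F ∈ 𝒟'₀(α)`, `X ∼ F`, and let `s₀ > 0` be such that
`Z(s,ω) ∈ (0, e)` for all `s ≥ s₀` and all unit vectors `ω`.  Then there is a constant `C`
depending only on `(F, A)` such that `(ln Z(s,ω))₊ ≤ C/A(s)` for all `s ≥ s₀` and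
`ω ∈ S^{d-1}`. -/
theorem log_Z_bound {d : ℕ} {α : ℝ} {Ω : Type} [MeasureSpace Ω]
    (hα : 0 < α) (hα2 : α ≤ 2)
    (D : DomainSetup d α Ω) (s₀ : ℝ) (hs₀ : 0 < s₀)
    (hZ : ∀ s : ℝ, s₀ ≤ s → ∀ ω : E d, ‖ω‖ = 1 →
      Zfun D s ω ∈ Ioo (0:ℝ) (Real.exp 1)) :
    ∃ C : ℝ, ∀ s : ℝ, s₀ ≤ s → ∀ ω : E d, ‖ω‖ = 1 →
      max (Real.log (Zfun D s ω)) 0 ≤ C / D.A s := by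
  obtain ⟨s₁, hs₁, hV⟩ := V_bound D
  obtain ⟨C₂, hC₂, s₂, hs₁₂, hkey⟩ := key D hs₁ hV
  set s₃ : ℝ := max s₂ s₀ with hs₃def
  have hs₃pos : 0 < s₃ := lt_of_lt_of_le hs₀ (le_max_right _ _)
  have hAs₃ : 0 < D.A s₃ := A_pos D hs₃pos
  refine ⟨max (D.A s₃) (C₂ + 2), fun s hs ω hω => ?_⟩
  have hspos : 0 < s := lt_of_lt_of_le hs₀ hs
  have hAs : 0 < D.A s := A_pos D hspos
  have hC : 0 < max (D.A s₃) (C₂ + 2) := lt_max_of_lt_left hAs₃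
  have hZs := hZ s hs ω hω
  rcases le_total s₃ s with hcase | hcase
  · -- large s
    have hss₂ : s₂ ≤ s := le_trans (le_max_left _ _) hcase
    have hss₁ : s₁ ≤ s := le_trans hs₁₂ hss₂
    have hlog : Real.log (Zfun D s ω) ≤ Zfun D s ω - 1 :=
      Real.log_le_sub_one_of_pos hZs.1
    have h1 : Zfun D s ω - 1 ≤ cint D s ω / s + Vint D s / s ^ 2 := by
      have := Z_le D s hspos ω hω
      linarith
    have h2 : cint D s ω / s ≤ C₂ / D.A s := hkey s hss₂ ω hω
    have h3 : Vint D s / s ^ 2 ≤ 2 / D.A s := by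
      have hVs := hV s hss₁
      rw [div_le_div_iff₀ (by positivity) hAs]
      calc Vint D s * D.A s ≤ (2 * s ^ 2 / D.A s) * D.A s := by
            apply mul_le_mul_of_nonneg_right hVs hAs.le
        _ = 2 * s ^ 2 := by field_simp
    apply max_le _ (by positivity)
    calc Real.log (Zfun D s ω) ≤ C₂ / D.A s + 2 / D.A s := by linarith
      _ = (C₂ + 2) / D.A s := by ring
      _ ≤ max (D.A s₃) (C₂ + 2) / D.A s := by
          gcongr
          exact le_max_right _ _
  · -- small s
    have hlog : Real.log (Zfun D s ω) ≤ 1 := by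
      have := hZs.2
      have h := Real.log_le_log (by exact hZs.1) this.le
      rwa [Real.log_exp] at h
    have hmono : D.A s ≤ D.A s₃ := by
      rcases eq_or_lt_of_le hcase with h | h
      · rw [h]
      · exact (D.A_mono (mem_Ici.2 hspos.le) (mem_Ici.2 hs₃pos.le) h).le
    apply max_le _ (by positivity)
    calc Real.log (Zfun D s ω) ≤ 1 := hlog
      _ ≤ D.A s₃ / D.A s := by
          rw [le_div_iff₀ hAs]; simpa using hmono
      _ ≤ max (D.A s₃) (C₂ + 2) / D.A s := by
          gcongr
          exact le_max_left _ _
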